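/- arXiv:2011.00810 — 3 statements merged into one kernel-verified Lean document; each statement's English description precedes it below -/
import Mathlib

section
/- Let π̂ : [n] → ℕ be a function (pre-tie-breaking position estimates) and π_0 the identity permutation, and suppose there is N ≥ 0 such that π̂(i) ∈ [i - N, i + N] for all i ∈ [n]. Let σ ∈ S_n be any permutation consistent with π̂, i.e., π̂(i) < π̂(j) implies σ(i) < σ(j) for all i, j. Then |σ(i) - i| ≤ 2N for all i ∈ [n]. -/
/-!
Exactly `σ i + 1` indices `j` satisfy `σ j ≤ σ i`. Consistency forces `π̂ j ≤ π̂ i` for each of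
them, hence `j ≤ π̂ j + N ≤ π̂ i + N ≤ i + 2N`, and at most `i + 2N + 1` indices satisfy that.
Symmetrically, all `i - 2N` indices `j < i - 2N` have `σ j < σ i`, and there are `σ i` of those.
-/

open Finset

namespace Equiv.Perm

variable {n : ℕ} (σ : Perm (Fin n))

theorem card_filter_apply_le (k : Fin n) : #{j | σ j ≤ k} = k + 1 := by
  rw [card_equiv σ (t := Iic k) (by simp), Fin.card_Iic]

theorem card_filter_apply_lt (k : Fin n) : #{j | σ j < k} = k := by
  rw [card_equiv σ (t := Iio k) (by simp), Fin.card_Iio]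

variable {σ} {i : Fin n} {m : ℕ}

theorem val_apply_le_of_forall_apply_le_imp (h : ∀ j, σ j ≤ σ i → (j : ℕ) ≤ m) :
    (σ i : ℕ) ≤ m := by
  have hsub : #{j | σ j ≤ σ i} ≤ #{j : Fin n | (j : ℕ) < m + 1} :=
    card_le_card fun j hj ↦ by
      simp only [mem_filter, mem_univ, true_and] at hj ⊢
      exact Nat.lt_succ_of_le (h j hj)
  rw [card_filter_apply_le, Fin.card_filter_val_lt] at hsub
  omega

theorem le_val_apply_of_forall_apply_ge_imp (h : ∀ j, σ i ≤ σ j → m ≤ (j : ℕ)) :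
    m ≤ (σ i : ℕ) := by
  have hsub : #{j : Fin n | (j : ℕ) < m} ≤ #{j | σ j < σ i} :=
    card_le_card fun j hj ↦ by
      simp only [mem_filter, mem_univ, true_and] at hj ⊢
      exact lt_of_not_ge fun hij ↦ (h j hij).not_gt hj
  rw [card_filter_apply_lt, Fin.card_filter_val_lt] at hsub
  have := h i le_rfl
  omega

end Equiv.Perm

/-- tie-breaking step: if the pre-tie-breaking position
estimates `π̂ : [n] → ℕ` satisfy `|π̂(i) - i| ≤ N` (with the central ranking
being the identity), then any permutation `σ` consistent with `π̂` (i.e.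
`π̂(i) < π̂(j) → σ(i) < σ(j)`) satisfies `|σ(i) - i| ≤ 2N` for all `i`. -/
theorem tie_breaking_doubles_error {n : ℕ} (πhat : Fin n → ℕ) (N : ℕ)
    (happrox : ∀ i : Fin n, πhat i ≤ (i : ℕ) + N ∧ (i : ℕ) ≤ πhat i + N)
    (σ : Equiv.Perm (Fin n))
    (hcons : ∀ i j : Fin n, πhat i < πhat j → σ i < σ j) :
    ∀ i : Fin n, ((σ i : ℕ) ≤ (i : ℕ) + 2 * N) ∧ ((i : ℕ) ≤ (σ i : ℕ) + 2 * N) := by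
  have hmono : ∀ j k, σ j ≤ σ k → πhat j ≤ πhat k := fun j k hjk ↦
    le_of_not_gt fun hlt ↦ (hcons k j hlt).not_ge hjk
  intro i
  constructor
  · refine Equiv.Perm.val_apply_le_of_forall_apply_le_imp fun j hj ↦ ?_
    linarith [hmono j i hj, (happrox j).2, (happrox i).1]
  · suffices (i : ℕ) - 2 * N ≤ σ i by omega
    refine Equiv.Perm.le_val_apply_of_forall_apply_ge_imp fun j hj ↦ ?_
    have := hmono i j hj
    have := (happrox i).2
    have := (happrox j).1
    omega
end

section
/- Let F be a finite set of hypotheses (central rankings) and suppose an estimator A maps observations Π̂ ∈ Ω to elements of F (possibly randomly). Suppose there exists π ∈ F and c : F → ℝ≥0 with c(π) = 0 such that for all π' ∈ F and all Π̂ ∈ Ω: Pr[Π̂ | π] ≥ e^{-β c(π')} Pr[Π̂ | π']. If the estimator succeeds with probability at least 1-ε under every hypothesis, i.e., Σ_{Π̂} Pr[A(Π̂) = π'] Pr[Π̂ | π'] ≥ 1-ε for all π' ∈ F, then (1-ε) Σ_{π'∈F} e^{-β c(π')} ≤ 1. -/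
open Finset

/-! Averaging the estimator's success probabilities against the weights `e^{-β c(π')}` turns them
into probabilities under the single hypothesis `π`: by the likelihood-ratio bound, the weighted
success of each output is at most its probability under `π`, and since the estimator outputs at
most one hypothesis these probabilities sum to at most `1`. -/

lemma sum_mul_le_of_sum_le_one {ι : Type*} [Fintype ι] {a b : ι → ℝ} {M : ℝ}
    (ha : ∀ i, 0 ≤ a i) (ha1 : ∑ i, a i ≤ 1) (hb : ∀ i, b i ≤ M) (hM : 0 ≤ M) :
    ∑ i, a i * b i ≤ M :=
  calc ∑ i, a i * b i ≤ ∑ i, a i * M := sum_le_sum fun i _ => mul_le_mul_of_nonneg_left (hb i) (ha i)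
    _ = (∑ i, a i) * M := (sum_mul ..).symm
    _ ≤ 1 * M := mul_le_mul_of_nonneg_right ha1 hM
    _ = M := one_mul M

lemma sum_weighted_success_le {F Ω : Type*} [Fintype F] [Fintype Ω]
    (Pr : F → Ω → ℝ) (A : Ω → F → ℝ) (w : F → ℝ) (π : F)
    (hPr0 : ∀ o, 0 ≤ Pr π o) (hA0 : ∀ o π', 0 ≤ A o π') (hA1 : ∀ o, ∑ π', A o π' ≤ 1)
    (hratio : ∀ π' o, w π' * Pr π' o ≤ Pr π o) :
    ∑ π', w π' * ∑ o, A o π' * Pr π' o ≤ ∑ o, Pr π o := by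
  have hswap : ∑ π', w π' * ∑ o, A o π' * Pr π' o = ∑ o, ∑ π', A o π' * (w π' * Pr π' o) := by
    simp only [mul_sum]
    rw [sum_comm]
    exact sum_congr rfl fun o _ => sum_congr rfl fun π' _ => by ring
  rw [hswap]
  exact sum_le_sum fun o _ => sum_mul_le_of_sum_le_one (hA0 o) (hA1 o) (hratio · o) (hPr0 o)

theorem estimation_lower_bound_core_general {F Ω : Type*} [Fintype F] [Fintype Ω]
    (β ε : ℝ)
    -- likelihoods of the hypotheses
    (Pr : F → Ω → ℝ) (hPr0 : ∀ π' o, 0 ≤ Pr π' o)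
    (hPr1 : ∀ π' : F, ∑ o : Ω, Pr π' o = 1)
    -- randomized estimator: A o π' is the probability of outputting π' on Π
    (A : Ω → F → ℝ) (hA0 : ∀ o π', 0 ≤ A o π')
    (hA1 : ∀ o : Ω, ∑ π' : F, A o π' ≤ 1)
    -- likelihood-ratio domination by the hypothesis π
    (π : F) (c : F → ℝ)
    (hratio : ∀ (π' : F) (o : Ω), Real.exp (-β * c π') * Pr π' o ≤ Pr π o)
    -- the estimator succeeds with probability at least 1-ε under every hypothesis
    (hsucc : ∀ π' : F, 1 - ε ≤ ∑ o : Ω, A o π' * Pr π' o) :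
    (1 - ε) * ∑ π' : F, Real.exp (-β * c π') ≤ 1 :=
  calc (1 - ε) * ∑ π', Real.exp (-β * c π')
      = ∑ π', Real.exp (-β * c π') * (1 - ε) := by rw [mul_sum]; simp only [mul_comm]
    _ ≤ ∑ π', Real.exp (-β * c π') * ∑ o, A o π' * Pr π' o :=
        sum_le_sum fun π' _ => mul_le_mul_of_nonneg_left (hsucc π') (Real.exp_nonneg _)
    _ ≤ ∑ o, Pr π o := sum_weighted_success_le Pr A _ π (hPr0 π) hA0 hA1 hratio
    _ = 1 := hPr1 π

/-- abstract information-theoretic estimation bound: if there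
is a hypothesis `π` whose likelihood dominates every hypothesis `π'` up to a
factor `e^{-β c(π')}` (with `c(π) = 0`), and a (possibly randomized)
estimator succeeds with probability at least `1-ε` under every hypothesis,
then `(1-ε) Σ_{π'} e^{-β c(π')} ≤ 1`. -/
theorem estimation_lower_bound_core {F Ω : Type*} [Fintype F] [Fintype Ω]
    (β ε : ℝ)
    -- likelihoods of the hypotheses
    (Pr : F → Ω → ℝ) (hPr0 : ∀ π' o, 0 ≤ Pr π' o)
    (hPr1 : ∀ π' : F, ∑ o : Ω, Pr π' o = 1)
    -- randomized estimator: A o π' is the probability of outputting π' on Π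
    (A : Ω → F → ℝ) (hA0 : ∀ o π', 0 ≤ A o π')
    (hA1 : ∀ o : Ω, ∑ π' : F, A o π' ≤ 1)
    -- likelihood-ratio domination by the hypothesis π
    (π : F) (c : F → ℝ) (hc0 : ∀ π', 0 ≤ c π') (hcπ : c π = 0)
    (hratio : ∀ (π' : F) (o : Ω), Real.exp (-β * c π') * Pr π' o ≤ Pr π o)
    -- the estimator succeeds with probability at least 1-ε under every hypothesis
    (hsucc : ∀ π' : F, 1 - ε ≤ ∑ o : Ω, A o π' * Pr π' o) :
    (1 - ε) * ∑ π' : F, Real.exp (-β * c π') ≤ 1 :=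
  estimation_lower_bound_core_general β ε Pr hPr0 hPr1 A hA0 hA1 π c hratio hsucc
end

section
/- Combining the previous two facts: let n be even, ε ∈ (0, 1/2], β > 0, and suppose for the matching P = {(1,2),...,(n-1,n)} at least n/4 pairs (i,j) ∈ P have co-occurrence count m_{i,j} < (1/β)·ln(n(1-ε)/(4ε)). Then no estimator can recover every central ranking in F (the family of permutations respecting the pair partition) with probability at least 1-ε: we get the contradiction (1-ε)·(1 + (n/4)·(4ε/(n(1-ε)))) ≤ 1, i.e., 1 + ε ≤ 1, which is false since ε > 0. -/
open Finset

/-- The first element of the `i`-th consecutive pair of `[2k]` (0-indexed). -/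
def pairFst (k : ℕ) (i : Fin k) : Fin (2 * k) := ⟨2 * i.val, by omega⟩

/-- The second element of the `i`-th consecutive pair of `[2k]` (0-indexed). -/
def pairSnd (k : ℕ) (i : Fin k) : Fin (2 * k) := ⟨2 * i.val + 1, by omega⟩

/-- The family `F` of permutations of `[2k]` preserving each consecutive pair
`{2i-1, 2i}` setwise. -/
def pairPerms (k : ℕ) : Finset (Equiv.Perm (Fin (2 * k))) :=
  (Finset.univ : Finset (Equiv.Perm (Fin (2 * k)))).filter
    (fun π => ∀ i : Fin k,
      ({π (pairFst k i), π (pairSnd k i)} : Finset (Fin (2 * k)))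
        = {pairFst k i, pairSnd k i})

/-- The set of matching pairs on which `π` and `π'` disagree. -/
def disagreeSet (k : ℕ) (π π' : Equiv.Perm (Fin (2 * k))) : Finset (Fin k) :=
  (Finset.univ : Finset (Fin k)).filter (fun i =>
    ¬ ((π (pairFst k i) < π (pairSnd k i)) ↔ (π' (pairFst k i) < π' (pairSnd k i))))


/-!
Compare every ranking of `F` with the identity. The likelihood-ratio bound turns the success
guarantee at `π'` into `(1 - ε) e^{-β m(D(π'))} ≤ Σ_o A o π' Pr 1 o`, and summing over `π' ∈ F`
gives `(1 - ε) Σ_{π' ∈ F} e^{-β m(D(π'))} ≤ 1`. The identity contributes `1` to this sum and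
the swap of each of the `n/4` rarely observed pairs more than `4ε / (n (1 - ε))`, so the left
side exceeds `(1 - ε) (1 + ε / (1 - ε)) = 1`.
-/

section Estimation

variable {α Ω : Type*} [Fintype Ω]

theorem one_sub_mul_sum_le_one_of_forall_success (F : Finset α) (π₀ : α) (ε : ℝ)
    (w : α → ℝ) (hw : ∀ π ∈ F, 0 ≤ w π)
    (Pr : α → Ω → ℝ) (hPr0 : ∀ o, 0 ≤ Pr π₀ o) (hPr1 : ∑ o, Pr π₀ o = 1)
    (hratio : ∀ π ∈ F, ∀ o, w π * Pr π o ≤ Pr π₀ o)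
    (A : Ω → α → ℝ) (hA0 : ∀ o, ∀ π ∈ F, 0 ≤ A o π) (hA1 : ∀ o, ∑ π ∈ F, A o π ≤ 1)
    (hsucc : ∀ π ∈ F, 1 - ε ≤ ∑ o, A o π * Pr π o) :
    (1 - ε) * ∑ π ∈ F, w π ≤ 1 := by
  have hsucc_base : ∀ π ∈ F, (1 - ε) * w π ≤ ∑ o, A o π * Pr π₀ o := fun π hπ =>
    calc (1 - ε) * w π ≤ (∑ o, A o π * Pr π o) * w π :=
          mul_le_mul_of_nonneg_right (hsucc π hπ) (hw π hπ)
      _ = ∑ o, A o π * (w π * Pr π o) := by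
          rw [Finset.sum_mul]; exact Finset.sum_congr rfl fun o _ => by ring
      _ ≤ ∑ o, A o π * Pr π₀ o :=
          Finset.sum_le_sum fun o _ => mul_le_mul_of_nonneg_left (hratio π hπ o) (hA0 o π hπ)
  calc (1 - ε) * ∑ π ∈ F, w π
      = ∑ π ∈ F, (1 - ε) * w π := Finset.mul_sum _ _ _
    _ ≤ ∑ π ∈ F, ∑ o, A o π * Pr π₀ o := Finset.sum_le_sum hsucc_base
    _ = ∑ o, (∑ π ∈ F, A o π) * Pr π₀ o := by
        rw [Finset.sum_comm]; exact Finset.sum_congr rfl fun o _ => (Finset.sum_mul _ _ _).symm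
    _ ≤ ∑ o, Pr π₀ o :=
        Finset.sum_le_sum fun o _ => mul_le_of_le_one_left (hPr0 o) (hA1 o)
    _ = 1 := hPr1

end Estimation

section PairSwap

variable (k : ℕ)

theorem pairFst_injective : Function.Injective (pairFst k) := by
  intro i j h
  simp only [pairFst, Fin.ext_iff] at h
  exact Fin.ext (by omega)

theorem pairSnd_injective : Function.Injective (pairSnd k) := by
  intro i j h
  simp only [pairSnd, Fin.ext_iff] at h
  exact Fin.ext (by omega)

theorem pairFst_ne_pairSnd (i j : Fin k) : pairFst k i ≠ pairSnd k j := by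
  simp only [pairFst, pairSnd, ne_eq, Fin.ext_iff]
  omega

theorem pairFst_lt_pairSnd (i : Fin k) : pairFst k i < pairSnd k i := by
  simp [pairFst, pairSnd, Fin.lt_def]

theorem one_mem_pairPerms : (1 : Equiv.Perm (Fin (2 * k))) ∈ pairPerms k := by
  simp [pairPerms]

theorem disagreeSet_self (π : Equiv.Perm (Fin (2 * k))) : disagreeSet k π π = ∅ := by
  ext
  simp [disagreeSet]

def pairSwap (i : Fin k) : Equiv.Perm (Fin (2 * k)) :=
  Equiv.swap (pairFst k i) (pairSnd k i)

variable {k}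

theorem pairSwap_apply_pairFst_of_ne {i j : Fin k} (h : j ≠ i) :
    pairSwap k i (pairFst k j) = pairFst k j :=
  Equiv.swap_apply_of_ne_of_ne ((pairFst_injective k).ne h) (pairFst_ne_pairSnd k j i)

theorem pairSwap_apply_pairSnd_of_ne {i j : Fin k} (h : j ≠ i) :
    pairSwap k i (pairSnd k j) = pairSnd k j :=
  Equiv.swap_apply_of_ne_of_ne (pairFst_ne_pairSnd k i j).symm ((pairSnd_injective k).ne h)

theorem pairSwap_mem_pairPerms (i : Fin k) : pairSwap k i ∈ pairPerms k := by
  simp only [pairPerms, mem_filter, mem_univ, true_and]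
  intro j
  by_cases h : j = i
  · subst h
    simp [pairSwap, Finset.pair_comm]
  · rw [pairSwap_apply_pairFst_of_ne h, pairSwap_apply_pairSnd_of_ne h]

theorem disagreeSet_one_pairSwap (i : Fin k) : disagreeSet k 1 (pairSwap k i) = {i} := by
  ext j
  simp only [disagreeSet, mem_filter, mem_univ, true_and, mem_singleton]
  simp only [Equiv.Perm.coe_one, id_eq]
  by_cases h : j = i
  · subst h
    simp only [pairSwap, Equiv.swap_apply_left, Equiv.swap_apply_right, iff_true]
    exact fun h' => (h'.mp (pairFst_lt_pairSnd k j)).not_gt (pairFst_lt_pairSnd k j)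
  · rw [pairSwap_apply_pairFst_of_ne h, pairSwap_apply_pairSnd_of_ne h]
    simp [h]

theorem pairSwap_injective : Function.Injective (pairSwap k) := fun i j h =>
  by simpa [disagreeSet_one_pairSwap] using congrArg (disagreeSet k 1) h

theorem pairSwap_ne_one (i : Fin k) : pairSwap k i ≠ 1 := fun h => by
  simpa [disagreeSet_self, disagreeSet_one_pairSwap] using congrArg (disagreeSet k 1) h

/-- Only the identity and the single pair swaps are kept from the sum over `F`. -/
theorem add_sum_le_sum_pairPerms (w : Finset (Fin k) → ℝ) (hw : ∀ D, 0 ≤ w D)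
    (S : Finset (Fin k)) :
    w ∅ + ∑ i ∈ S, w {i} ≤ ∑ π ∈ pairPerms k, w (disagreeSet k 1 π) := by
  have hsub : insert 1 (S.image (pairSwap k)) ⊆ pairPerms k := by
    simp only [Finset.insert_subset_iff, Finset.image_subset_iff]
    exact ⟨one_mem_pairPerms k, fun i _ => pairSwap_mem_pairPerms i⟩
  have hone : (1 : Equiv.Perm (Fin (2 * k))) ∉ S.image (pairSwap k) := by
    simp only [Finset.mem_image, not_exists, not_and]
    exact fun i _ => pairSwap_ne_one i
  calc w ∅ + ∑ i ∈ S, w {i}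
      = ∑ π ∈ insert 1 (S.image (pairSwap k)), w (disagreeSet k 1 π) := by
        rw [Finset.sum_insert hone, Finset.sum_image fun i _ j _ h => pairSwap_injective h]
        simp [disagreeSet_self, disagreeSet_one_pairSwap]
    _ ≤ ∑ π ∈ pairPerms k, w (disagreeSet k 1 π) :=
        Finset.sum_le_sum_of_subset_of_nonneg hsub fun _ _ _ => hw _

end PairSwap

theorem inv_lt_exp_neg_mul {β C x : ℝ} (hβ : 0 < β) (hC : 0 < C)
    (hx : x < 1 / β * Real.log C) : C⁻¹ < Real.exp (-β * x) := by
  have hβx : β * x < Real.log C := by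
    rwa [one_div, ← div_eq_inv_mul, lt_div_iff₀' hβ] at hx
  calc C⁻¹ = Real.exp (-Real.log C) := by rw [Real.exp_neg, Real.exp_log hC]
    _ < Real.exp (-β * x) := Real.exp_lt_exp.mpr (by linarith)

theorem one_le_one_sub_mul_one_add_mul_inv {k t ε : ℝ} (hk : 0 < k) (hε0 : 0 < ε) (hε1 : ε < 1)
    (ht : 2 * k / 4 ≤ t) : 1 ≤ (1 - ε) * (1 + t * (2 * k * (1 - ε) / (4 * ε))⁻¹) := by
  have hε : (1 - ε) * (2 * k / 4 * (2 * k * (1 - ε) / (4 * ε))⁻¹) = ε := by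
    field_simp [(by linarith : (1 - ε) ≠ 0)]
  have hC : 0 ≤ (1 - ε) * (2 * k * (1 - ε) / (4 * ε))⁻¹ := by
    have : 0 < 1 - ε := by linarith
    positivity
  nlinarith

theorem no_estimator_recovers_all_general {Ω : Type*} [Fintype Ω]
    (k : ℕ) (hk : 0 < k) (β ε : ℝ) (hβ : 0 < β) (hε0 : 0 < ε) (hε1 : ε ≤ 1 / 2)
    -- co-occurrence counts of the matching pairs
    (m : Fin k → ℝ)
    -- at least n/4 matching pairs are observed fewer than M times
    (hfew : ((2 * k : ℝ)) / 4 ≤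
      (((Finset.univ : Finset (Fin k)).filter (fun i =>
        m i < (1 / β) * Real.log ((2 * k : ℝ) * (1 - ε) / (4 * ε)))).card : ℝ))
    -- likelihoods of the candidate central rankings
    (Pr : Equiv.Perm (Fin (2 * k)) → Ω → ℝ)
    (hPr0 : ∀ π o, 0 ≤ Pr π o)
    (hPr1 : ∀ π ∈ pairPerms k, ∑ o : Ω, Pr π o = 1)
    -- likelihood-ratio inequality within F, with exponent the total
    -- co-occurrence count of the disagreeing pairs
    (hratio : ∀ π ∈ pairPerms k, ∀ π' ∈ pairPerms k, ∀ o : Ω,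
      Real.exp (-β * ∑ i ∈ disagreeSet k π π', m i) * Pr π' o ≤ Pr π o)
    -- randomized estimator: A o π is the probability of outputting π on o
    (A : Ω → Equiv.Perm (Fin (2 * k)) → ℝ) (hA0 : ∀ o π, 0 ≤ A o π)
    (hA1 : ∀ o : Ω, ∑ π : Equiv.Perm (Fin (2 * k)), A o π ≤ 1) :
    ¬ (∀ π ∈ pairPerms k, 1 - ε ≤ ∑ o : Ω, A o π * Pr π o) := by
  intro hsucc
  set C : ℝ := (2 * k : ℝ) * (1 - ε) / (4 * ε)
  set T := (Finset.univ : Finset (Fin k)).filter (fun i => m i < 1 / β * Real.log C)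
  set w : Finset (Fin k) → ℝ := fun D => Real.exp (-β * ∑ i ∈ D, m i)
  have hε : 0 < 1 - ε := by linarith
  have hC : 0 < C := by positivity
  have hT : T.Nonempty := Finset.card_pos.mp <| by
    exact_mod_cast (show (0 : ℝ) < T.card from lt_of_lt_of_le (by positivity) hfew)
  have hw : ∀ D, 0 ≤ w D := fun _ => (Real.exp_pos _).le
  have upper : (1 - ε) * ∑ π ∈ pairPerms k, w (disagreeSet k 1 π) ≤ 1 :=
    one_sub_mul_sum_le_one_of_forall_success _ 1 ε _ (fun _ _ => hw _) Pr (hPr0 1)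
      (hPr1 1 (one_mem_pairPerms k)) (hratio 1 (one_mem_pairPerms k)) A (fun o π _ => hA0 o π)
      (fun o => (sum_le_sum_of_subset_of_nonneg (subset_univ _) fun π _ _ => hA0 o π).trans
        (hA1 o)) hsucc
  have lower : 1 + T.card * C⁻¹ < ∑ π ∈ pairPerms k, w (disagreeSet k 1 π) :=
    calc 1 + T.card * C⁻¹ = w ∅ + ∑ _i ∈ T, C⁻¹ := by simp [w]
      _ < w ∅ + ∑ i ∈ T, w {i} := by
        gcongr with i hi
        simpa [w] using inv_lt_exp_neg_mul hβ hC (mem_filter.mp hi).2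
      _ ≤ _ := add_sum_le_sum_pairPerms w hw T
  have hexact := one_le_one_sub_mul_one_add_mul_inv (by exact_mod_cast hk) hε0 (by linarith) hfew
  linarith [mul_lt_mul_of_pos_left lower hε]

/-- lower bound, Theorem 2 of the paper, combined step: with
`n = 2k` even, `ε ∈ (0,1/2]`, `β > 0`, if at least `n/4` of the matching
pairs have co-occurrence count `m_{i,j} < (1/β)·ln(n(1-ε)/(4ε))`, then no
estimator can recover every central ranking in `F` with probability at least
`1-ε`. -/
theorem no_estimator_recovers_all {Ω : Type*} [Fintype Ω]
    (k : ℕ) (hk : 0 < k) (β ε : ℝ) (hβ : 0 < β) (hε0 : 0 < ε) (hε1 : ε ≤ 1 / 2)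
    -- co-occurrence counts of the matching pairs
    (m : Fin k → ℝ) (hm : ∀ i, 0 ≤ m i)
    -- at least n/4 matching pairs are observed fewer than M times
    (hfew : ((2 * k : ℝ)) / 4 ≤
      (((Finset.univ : Finset (Fin k)).filter (fun i =>
        m i < (1 / β) * Real.log ((2 * k : ℝ) * (1 - ε) / (4 * ε)))).card : ℝ))
    -- likelihoods of the candidate central rankings
    (Pr : Equiv.Perm (Fin (2 * k)) → Ω → ℝ)
    (hPr0 : ∀ π o, 0 ≤ Pr π o)
    (hPr1 : ∀ π ∈ pairPerms k, ∑ o : Ω, Pr π o = 1)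
    -- likelihood-ratio inequality within F, with exponent the total
    -- co-occurrence count of the disagreeing pairs
    (hratio : ∀ π ∈ pairPerms k, ∀ π' ∈ pairPerms k, ∀ o : Ω,
      Real.exp (-β * ∑ i ∈ disagreeSet k π π', m i) * Pr π' o ≤ Pr π o)
    -- randomized estimator: A o π is the probability of outputting π on o
    (A : Ω → Equiv.Perm (Fin (2 * k)) → ℝ) (hA0 : ∀ o π, 0 ≤ A o π)
    (hA1 : ∀ o : Ω, ∑ π : Equiv.Perm (Fin (2 * k)), A o π ≤ 1) :
    ¬ (∀ π ∈ pairPerms k, 1 - ε ≤ ∑ o : Ω, A o π * Pr π o) :=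
  no_estimator_recovers_all_general k hk β ε hβ hε0 hε1 m hfew Pr hPr0 hPr1 hratio A hA0 hA1
end
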